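/- Let Tr be a DetLinTT^V and Q = (A, {p}) a 1-RQ. Suppose there exist t ∈ dom(Tr), a position ṽ ∈ pos(t), and a run m ∈ run(A, t⁻) with m(ṽ) = p, such that for every ν ∈ ℕ the data tree t^(ṽ←ν) satisfies Tr(t^(ṽ←ν)) = Tr(t). Then there is no 1-RQ Q' over the output alphabet satisfying val(Q'(t_d)) = ⋃_{t' ∈ Tr⁻¹(t_d)} val(Q(t')) for all t_d ∈ rng(Tr); that is, Tr does not weakly preserve Q. -/

import Mathlib

/-! Data trees over a ranked alphabet: each node is labeled by a symbol
(respecting arities) and optionally carries a data value in ℕ. -/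

inductive DTree (S : Type) (ar : S → ℕ) : Type
  | node (σ : S) (val : Option ℕ) (children : Fin (ar σ) → DTree S ar) : DTree S ar

namespace DTree

variable {S : Type} {ar : S → ℕ}

/-- Root label. -/
def label : DTree S ar → S
  | node σ _ _ => σ

/-- Root data value (if any). -/
def rootVal : DTree S ar → Option ℕ
  | node _ v _ => v

/-- Subtree at a position (a position is a list of child indices). -/
def subtreeAt : DTree S ar → List ℕ → Option (DTree S ar)
  | t, [] => some t
  | node σ _ c, i :: p => if h : i < ar σ then (c ⟨i, h⟩).subtreeAt p else none

/-- The set of positions of a data tree. -/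
def pos (t : DTree S ar) : Set (List ℕ) := {v | (t.subtreeAt v).isSome}

/-- The data value carried at position `v` (if the position exists and carries one). -/
def valAt (t : DTree S ar) (v : List ℕ) : Option ℕ :=
  (t.subtreeAt v).bind rootVal

/-- `t⁻`: erase all data values. A (plain) tree is a data tree of the form `t.erase`. -/
def erase : DTree S ar → DTree S ar
  | node σ _ c => node σ none fun i => (c i).erase

/-- A data tree is proper if every node carries a data value. -/
inductive Proper : DTree S ar → Prop
  | node (σ : S) (ν : ℕ) (c : Fin (ar σ) → DTree S ar) :
      (∀ i, Proper (c i)) → Proper (DTree.node σ (some ν) c)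

/-- `t^(v←ν)`: set the data value at position `v` to `ν`. -/
def setVal : DTree S ar → List ℕ → ℕ → DTree S ar
  | node σ _w c, [], ν => node σ (some ν) c
  | node σ w c, i :: p, ν =>
      node σ w fun k => if (k : ℕ) = i then (c k).setVal p ν else c k

end DTree

/-! Tree automata. -/

/-- A (top-down) tree automaton over the ranked alphabet `(S, ar)` with state set `P`:
initial states and transition rules `p → σ(p₁,…,p_n)` (with `n = ar σ`). -/
structure TA (S : Type) (ar : S → ℕ) (P : Type) where
  init : Set P
  rules : P → (σ : S) → (Fin (ar σ) → P) → Prop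

namespace TA

variable {S : Type} {ar : S → ℕ} {P : Type}

/-- `m` is an accepting run of `A` on `t`: the root gets an initial state and every
position is consistent with some transition rule.  (Runs only look at labels, so a
run on `t` is the same thing as a run on `t⁻`.) -/
def IsRun (A : TA S ar P) (t : DTree S ar) (m : List ℕ → P) : Prop :=
  m [] ∈ A.init ∧
    ∀ v s, t.subtreeAt v = some s →
      A.rules (m v) s.label fun i => m (v ++ [(i : ℕ)])

/-- The language of a tree automaton. -/
def Lang (A : TA S ar P) : Set (DTree S ar) := {t | ∃ m, A.IsRun t m}

/-- `A` is reduced: every state is assigned to some position by some accepting run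
(hence there are no useless states, and so no useless rules). -/
def Reduced (A : TA S ar P) : Prop :=
  ∀ p : P, ∃ (t : DTree S ar) (m : List ℕ → P) (v : List ℕ),
    A.IsRun t m ∧ v ∈ t.pos ∧ m v = p

end TA

/-! Run-based n-ary queries. -/

/-- A run-based `n`-ary query `(A, S)`: a tree automaton together with a set of
`n`-tuples of states. -/
structure NRQ (S : Type) (ar : S → ℕ) (P : Type) (n : ℕ) where
  aut : TA S ar P
  sel : Set (Fin n → P)

namespace NRQ

variable {S : Type} {ar : S → ℕ} {P : Type} {n : ℕ}

/-- `Q(t)`: the set of position tuples selected by some accepting run on `t⁻`. -/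
def ans (Q : NRQ S ar P n) (t : DTree S ar) : Set (Fin n → List ℕ) :=
  {vs | (∀ i, vs i ∈ t.pos) ∧
    ∃ m, Q.aut.IsRun t.erase m ∧ (fun i => m (vs i)) ∈ Q.sel}

/-- `val(Q(t))`: the corresponding tuples of data values. -/
def valAns (Q : NRQ S ar P n) (t : DTree S ar) : Set (Fin n → ℕ) :=
  {ds | ∃ vs ∈ Q.ans t, ∀ i, t.valAt (vs i) = some (ds i)}

end NRQ

/-! Contexts over an output alphabet, with variables `x₁,…,x_n`. -/

inductive Ctx (D : Type) (ar : D → ℕ) (n : ℕ) : Type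
  | var (i : Fin n)
  | node (d : D) (children : Fin (ar d) → Ctx D ar n)

namespace Ctx

variable {D : Type} {ar : D → ℕ} {n : ℕ}

/-- Variable `i` occurs in the context. -/
def HasVar : Ctx D ar n → Fin n → Prop
  | var j, i => j = i
  | node _ c, i => ∃ k, (c k).HasVar i

/-- Variable `i` occurs at position `v` of the context. -/
def VarAt : Ctx D ar n → Fin n → List ℕ → Prop
  | var j, i, v => j = i ∧ v = []
  | node _ _, _, [] => False
  | node d c, i, k :: p => ∃ h : k < ar d, (c ⟨k, h⟩).VarAt i p

/-- Position `v` of the context is labeled by an output symbol. -/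
def SymAt : Ctx D ar n → List ℕ → Prop
  | var _, _ => False
  | node _ _, [] => True
  | node d c, k :: p => ∃ h : k < ar d, (c ⟨k, h⟩).SymAt p

/-- The context is linear: each variable occurs at most once. -/
def Linear (C : Ctx D ar n) : Prop :=
  ∀ i v w, C.VarAt i v → C.VarAt i w → v = w

/-- Instantiate a context: substitute `sub i` for variable `xᵢ`, and place the data
value `ν` at the (optional) designated position `j`; all other output nodes carry
no value. -/
def inst : Ctx D ar n → (Fin n → DTree D ar) → Option (List ℕ) → ℕ → DTree D ar
  | var i, sub, _, _ => sub i
  | node d c, sub, j, ν =>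
      DTree.node d (if j = some [] then some ν else none) fun k =>
        (c k).inst sub
          (match j with
            | some (m :: p) => if m = (k : ℕ) then some p else none
            | _ => none) ν

end Ctx

/-! Linear top-down data tree transducers (LinTT^V). -/

/-- A transduction rule `p(σ^(z)(x₁,…,x_n)) → C^(j←z)[p₁(x₁),…,p_n(x_n)]`
(the value-position designation `vpos` is optional). -/
structure TRule (S : Type) (arS : S → ℕ) (D : Type) (arD : D → ℕ) (P : Type) where
  st : P
  sym : S
  chst : Fin (arS sym) → P
  rhs : Ctx D arD (arS sym)
  vpos : Option (List ℕ)

/-- Well-formedness: the right-hand side is linear and the designated value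
position (if any) is an output-symbol-labeled position of the context. -/
def TRule.WF {S D P : Type} {arS : S → ℕ} {arD : D → ℕ} (r : TRule S arS D arD P) : Prop :=
  r.rhs.Linear ∧ ∀ v ∈ r.vpos, r.rhs.SymAt v

/-- A linear top-down data tree transducer. -/
structure LinTTV (S : Type) (arS : S → ℕ) (D : Type) (arD : D → ℕ) (P : Type) where
  init : Set P
  rules : Set (TRule S arS D arD P)
  wf : ∀ r ∈ rules, r.WF

namespace LinTTV

variable {S D P : Type} {arS : S → ℕ} {arD : D → ℕ}

/-- `Deriv Tr p t t'`: starting in state `p`, the transducer rewrites `p(t)` to the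
output data tree `t'`.  A rule applies to `p(σ^(ν)(t₁,…,t_n))` and produces its
right-hand side context instantiated at value `ν`, where each variable `xᵢ`
occurring in the context is replaced by an output of the derivation from
`pᵢ(tᵢ)` (subtrees at non-occurring variables are deleted). -/
inductive Deriv (Tr : LinTTV S arS D arD P) : P → DTree S arS → DTree D arD → Prop
  | step (r : TRule S arS D arD P) (hr : r ∈ Tr.rules) (ν : ℕ)
      (ts : Fin (arS r.sym) → DTree S arS) (sub : Fin (arS r.sym) → DTree D arD)
      (h : ∀ i, r.rhs.HasVar i → Deriv Tr (r.chst i) (ts i) (sub i)) :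
      Deriv Tr r.st (DTree.node r.sym (some ν) ts) (r.rhs.inst sub r.vpos ν)

/-- `rel Tr t t'` means `(t, t') ∈ rel(Tr)`: `t` is a proper input data tree and
`p_I(t) ⇒* t'` for some initial state `p_I`. -/
def rel (Tr : LinTTV S arS D arD P) (t : DTree S arS) (t' : DTree D arD) : Prop :=
  t.Proper ∧ ∃ p ∈ Tr.init, Tr.Deriv p t t'

/-- The domain of the transducer. -/
def dom (Tr : LinTTV S arS D arD P) : Set (DTree S arS) := {t | ∃ t', Tr.rel t t'}

/-- The range of the transducer. -/
def rng (Tr : LinTTV S arS D arD P) : Set (DTree D arD) := {t' | ∃ t, Tr.rel t t'}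

/-- `Tr⁻¹(t_d)`. -/
def preim (Tr : LinTTV S arS D arD P) (td : DTree D arD) : Set (DTree S arS) :=
  {t | Tr.rel t td}

/-- Deterministic: exactly one initial state, and for each state and input symbol
at most one rule. -/
def Deterministic (Tr : LinTTV S arS D arD P) : Prop :=
  (∃ p, Tr.init = {p}) ∧
    ∀ r₁ ∈ Tr.rules, ∀ r₂ ∈ Tr.rules, r₁.st = r₂.st → r₁.sym = r₂.sym → r₁ = r₂

end LinTTV

/-! Query preservation, stated for an arbitrary transformation relation
`R : input data trees → output data trees → Prop`. -/

/-- `R` (strongly) preserves `Q`: there is an `n`-ary query `Q'` over the output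
alphabet (a run-based query with a finite state set whose selected tuples consist of
pairwise distinct states) with `val(Q'(Tr(t))) = val(Q(t))` for all `t ∈ dom`
(Equation (1)). -/
def StronglyPreservesRel {S D PQ : Type} {arS : S → ℕ} {arD : D → ℕ} {n : ℕ}
    (R : DTree S arS → DTree D arD → Prop) (Q : NRQ S arS PQ n) : Prop :=
  ∃ (P' : Type) (_ : Fintype P') (Q' : NRQ D arD P' n),
    (∀ s ∈ Q'.sel, Function.Injective s) ∧
      ∀ t t', R t t' → Q'.valAns t' = Q.valAns t

/-- `R` weakly preserves `Q`: there is an `n`-ary query `Q'` over the output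
alphabet such that for every `t_d` in the range,
`val(Q'(t_d)) = ⋃_{t ∈ R⁻¹(t_d)} val(Q(t))` (Equation (2)). -/
def WeaklyPreservesRel {S D PQ : Type} {arS : S → ℕ} {arD : D → ℕ} {n : ℕ}
    (R : DTree S arS → DTree D arD → Prop) (Q : NRQ S arS PQ n) : Prop :=
  ∃ (P' : Type) (_ : Fintype P') (Q' : NRQ D arD P' n),
    (∀ s ∈ Q'.sel, Function.Injective s) ∧
      ∀ td, (∃ t, R t td) → Q'.valAns td = ⋃ t ∈ {t | R t td}, Q.valAns t

/-! A run-based query only selects values that occur in its input tree, and a data tree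
carries finitely many values, so if `Tr` weakly preserved `Q` the union of `val(Q(t'))`
over `t' ∈ Tr⁻¹(t_d)` would be finite. But each `t^(vt←ν)` lies in `Tr⁻¹(t_d)`, and since
`(t^(vt←ν))⁻ = t⁻` the run `m` still selects `vt`, whose value is now `ν`; so every
`ν ∈ ℕ` lies in that union. -/

namespace DTree

variable {S : Type} {ar : S → ℕ}

def vals (t : DTree S ar) : Set ℕ := {n | ∃ v, t.valAt v = some n}

theorem vals_node (σ : S) (w : Option ℕ) (c : Fin (ar σ) → DTree S ar) :
    (node σ w c).vals ⊆ {n | n ∈ w} ∪ ⋃ i, (c i).vals := by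
  rintro n ⟨_ | ⟨i, p⟩, hn⟩
  · exact Or.inl hn
  · simp only [valAt, subtreeAt] at hn
    split_ifs at hn with h
    · exact Or.inr (Set.mem_iUnion.2 ⟨⟨i, h⟩, p, hn⟩)
    · simp at hn

theorem vals_finite (t : DTree S ar) : t.vals.Finite := by
  induction t with
  | node σ w c ih =>
    refine Set.Finite.subset ?_ (vals_node σ w c)
    exact (w.toFinset.finite_toSet.subset fun n hn => by simpa using hn).union
      (Set.finite_iUnion ih)

theorem erase_setVal (t : DTree S ar) (v : List ℕ) (ν : ℕ) :
    (t.setVal v ν).erase = t.erase := by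
  induction t generalizing v with
  | node σ w c ih =>
    cases v with
    | nil => simp [setVal, erase]
    | cons i p =>
      simp only [setVal, erase, node.injEq, heq_eq_eq, true_and]
      funext k
      split_ifs <;> simp [ih]

theorem subtreeAt_erase (t : DTree S ar) (v : List ℕ) :
    t.erase.subtreeAt v = (t.subtreeAt v).map erase := by
  induction t generalizing v with
  | node σ w c ih =>
    cases v with
    | nil => simp [subtreeAt, erase]
    | cons i p =>
      simp only [erase, subtreeAt]
      split_ifs <;> simp [ih]

theorem pos_erase (t : DTree S ar) : t.erase.pos = t.pos := by
  ext v
  simp [pos, subtreeAt_erase, Option.isSome_map]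

theorem pos_setVal (t : DTree S ar) (v : List ℕ) (ν : ℕ) : (t.setVal v ν).pos = t.pos := by
  rw [← pos_erase, erase_setVal, pos_erase]

theorem valAt_setVal_self {t : DTree S ar} {v : List ℕ} (hv : v ∈ t.pos) (ν : ℕ) :
    (t.setVal v ν).valAt v = some ν := by
  induction t generalizing v with
  | node σ w c ih =>
    cases v with
    | nil => simp [setVal, valAt, subtreeAt, rootVal]
    | cons i p =>
      simp only [pos, Set.mem_ofPred_eq, subtreeAt] at hv
      split_ifs at hv with h
      · simpa [setVal, valAt, subtreeAt, h] using ih ⟨i, h⟩ hv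
      · simp at hv

end DTree

namespace NRQ

variable {S : Type} {ar : S → ℕ} {P : Type} {n : ℕ}

theorem valAns_subset_pi_vals (Q : NRQ S ar P n) (t : DTree S ar) :
    Q.valAns t ⊆ Set.univ.pi fun _ => t.vals :=
  fun _ ⟨vs, _, hval⟩ i _ => ⟨vs i, hval i⟩

theorem valAns_finite (Q : NRQ S ar P n) (t : DTree S ar) : (Q.valAns t).Finite :=
  (Set.Finite.pi fun _ => t.vals_finite).subset (Q.valAns_subset_pi_vals t)

theorem ans_setVal (Q : NRQ S ar P n) (t : DTree S ar) (v : List ℕ) (ν : ℕ) :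
    Q.ans (t.setVal v ν) = Q.ans t := by
  simp only [ans, DTree.pos_setVal, DTree.erase_setVal]

theorem const_mem_valAns_setVal {Q : NRQ S ar P 1} {t : DTree S ar} {v : List ℕ}
    (hv : (fun _ => v) ∈ Q.ans t) (ν : ℕ) :
    (fun _ => ν) ∈ Q.valAns (t.setVal v ν) :=
  ⟨fun _ => v, Q.ans_setVal t v ν ▸ hv, fun _ => DTree.valAt_setVal_self (hv.1 0) ν⟩

end NRQ

theorem WeaklyPreservesRel.finite_iUnion_valAns {S D PQ : Type} {arS : S → ℕ}
    {arD : D → ℕ} {n : ℕ} {R : DTree S arS → DTree D arD → Prop} {Q : NRQ S arS PQ n}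
    (hR : WeaklyPreservesRel R Q) {t : DTree S arS} {td : DTree D arD} (ht : R t td) :
    (⋃ t ∈ {t | R t td}, Q.valAns t).Finite := by
  obtain ⟨_, _, Q', -, hQ'⟩ := hR
  exact hQ' td ⟨t, ht⟩ ▸ Q'.valAns_finite td

theorem deleted_query_position_not_weaklyPreserved_general {S D PT PQ : Type} {arS : S → ℕ}
    {arD : D → ℕ}
    (Tr : LinTTV S arS D arD PT)
    (A : TA S arS PQ) (p : PQ)
    (t : DTree S arS) (td : DTree D arD)
    (vt : List ℕ) (hv : vt ∈ t.pos)
    (m : List ℕ → PQ) (hm : A.IsRun t.erase m) (hmp : m vt = p)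
    (hall : ∀ ν : ℕ, Tr.rel (t.setVal vt ν) td) :
    ¬ WeaklyPreservesRel Tr.rel (NRQ.mk A {fun _ : Fin 1 => p}) := by
  intro hpres
  have hsel : (fun _ => vt) ∈ (NRQ.mk A {fun _ : Fin 1 => p}).ans t :=
    ⟨fun _ => hv, m, hm, by simp [hmp]⟩
  have hconst : Set.range (Function.const (Fin 1)) ⊆
      ⋃ t ∈ {t | Tr.rel t td}, (NRQ.mk A {fun _ : Fin 1 => p}).valAns t := by
    rintro _ ⟨ν, rfl⟩
    exact Set.mem_biUnion (hall ν) (NRQ.const_mem_valAns_setVal hsel ν)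
  exact Set.infinite_range_of_injective Function.const_injective
    |>.mono hconst (hpres.finite_iUnion_valAns (hall 0))

/-- Let Tr be a DetLinTT^V and Q = (A, {p}) a 1-RQ. Suppose there are
t ∈ dom(Tr), a position vt ∈ pos(t), and a run m ∈ run(A, t⁻) with m(vt) = p, such
that Tr(t^(vt←ν)) = Tr(t) for every ν ∈ ℕ. Then Tr does not weakly preserve Q. -/
theorem deleted_query_position_not_weaklyPreserved {S D PT PQ : Type} {arS : S → ℕ}
    {arD : D → ℕ} [Fintype S] [Fintype D] [Fintype PT] [Fintype PQ]
    (Tr : LinTTV S arS D arD PT) (hdet : Tr.Deterministic)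
    (A : TA S arS PQ) (p : PQ)
    (t : DTree S arS) (td : DTree D arD) (htd : Tr.rel t td)
    (vt : List ℕ) (hv : vt ∈ t.pos)
    (m : List ℕ → PQ) (hm : A.IsRun t.erase m) (hmp : m vt = p)
    (hall : ∀ ν : ℕ, Tr.rel (t.setVal vt ν) td) :
    ¬ WeaklyPreservesRel Tr.rel (NRQ.mk A {fun _ : Fin 1 => p}) :=
  deleted_query_position_not_weaklyPreserved_general Tr A p t td vt hv m hm hmp hall
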